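/- The anchored burning map φ_{D,Λ} : R_Λ → T_Λ is injective: if η₁ ≠ η₂ are recurrent configurations on the wired graph G_Λ, then the spanning trees produced by the anchored burning bijection (with phases determined by the anchor D) are distinct. Consequently, since |R_Λ| = |T_Λ|, φ_{D,Λ} is a bijection. -/

import Mathlib

open Finset
open scoped Classical

namespace Anchored

variable {V : Type*} [DecidableEq V]

/-- iterating a partial parent map; `none` represents the sink. -/
def iterP (p : V → Option V) : ℕ → V → Option V
  | 0, v => some v
  | n + 1, v => (p v).bind (iterP p n)

/-- walks in the multigraph `a` avoiding the set `A` -/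
def ReachAvoid (a : V → V → ℕ) (A : Finset V) (u v : V) : Prop :=
  ∃ (nn : ℕ) (f : ℕ → V), f 0 = u ∧ f nn = v ∧ (∀ j ≤ nn, f j ∉ A) ∧
    ∀ j < nn, 0 < a (f j) (f (j + 1))

/-- oriented edges (with multiplicity index) from `v` into the finite set `T` -/
def edgesTo (a : V → V → ℕ) (v : V) (T : Finset V) : Finset (V × ℕ) :=
  T.biUnion fun w => (Finset.range (a v w)).image fun i => (w, i)

variable (a : V → V → ℕ) (S : Finset V) (out : V → Finset V)

/-- number of edges from `v` to the sink of the wired graph on `S`;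
`out v` is the set of heads of sink edges at `v` (actual vertices of `G`). -/
def sk (v : V) : ℕ := ∑ w ∈ out v, a v w

/-- degree of `v` in the wired graph on `S` -/
def degS (v : V) : ℕ := sk a out v + ∑ w ∈ S, a v w

variable (η : V → ℕ) (D : ℕ → Finset V) (kk : ℕ)

/-- number of global steps allotted to each phase of the anchored burning -/
def plen : ℕ := S.card + 1

/-- Flattened anchored burning process: `U m` is the set of unburnt vertices
after `m` global steps; phase `i` (for `i = 1, …, kk + 1`) occupies the steps
`m ∈ [(i-1)·plen, i·plen)` and forbids burning the vertices of `D (kk - i + 1)`.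
A vertex burns when its height is at least its number of edges to unburnt
vertices (the sink being burnt at time `0`). -/
def U : ℕ → Finset V
  | 0 => S
  | m + 1 => (U m).filter fun v =>
      v ∈ D (kk - m / plen S) ∨ η v < ∑ w ∈ U m, a v w

/-- the (anchored) burning time of `v` -/
noncomputable def τ (v : V) : ℕ := sInf {m | v ∉ U a S η D kk m}

/-- number of oriented edges from `v` whose head was burnt strictly before `v`
(including the sink edges) -/
noncomputable def mv (v : V) : ℕ :=
  sk a out v + ∑ w ∈ S \ U a S η D kk (τ a S η D kk v - 1), a v w

/-- the set of candidate tree edges at `v`: the oriented edges from `v` to the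
layer burnt at the previous step (at the first step of a phase: to everything
burnt in earlier phases, including the sink) -/
noncomputable def Fv (v : V) : Finset (V × ℕ) :=
  if (τ a S η D kk v - 1) % plen S = 0 then
    edgesTo a v (out v) ∪ edgesTo a v (S \ U a S η D kk (τ a S η D kk v - 1))
  else
    edgesTo a v
      (U a S η D kk (τ a S η D kk v - 2) \ U a S η D kk (τ a S η D kk v - 1))

/-- `Spec … prec e` says that `e` encodes the spanning tree assigned to `η` by
the anchored burning bijection: each `v ∈ S` gets the edge of `F_v` having
exactly `ℓ` predecessors in the ordering `prec v`, where
`η v = deg v - m_v + ℓ`. -/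
def Spec (prec : V → (V × ℕ) → (V × ℕ) → Prop) (e : V → Option (V × ℕ)) : Prop :=
  (∀ v ∉ S, e v = none) ∧
  ∀ v ∈ S, ∃ ed : V × ℕ, e v = some ed ∧ ed ∈ Fv a S out η D kk v ∧
    η v + mv a S out η D kk v =
      degS a S out v + ((Fv a S out η D kk v).filter fun f => prec v f ed).card

/-- the parent map (toward the sink) of an encoded spanning tree -/
def par (e : V → Option (V × ℕ)) (v : V) : Option V :=
  (e v).bind fun p => if p.1 ∈ S then some p.1 else none

/-- spanning trees of the wired graph on `S`, oriented toward the sink: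
every vertex of `S` carries exactly one valid oriented edge, and following
these edges one reaches the sink. -/
def IsSpanningTree (e : V → Option (V × ℕ)) : Prop :=
  (∀ v ∉ S, e v = none) ∧
  (∀ v ∈ S, ∃ w i, e v = some (w, i) ∧ i < a v w ∧ (w ∈ S ∨ w ∈ out v)) ∧
  (∀ v ∈ S, ∃ m, iterP (par S e) m v = none)

/-- stable configurations on the wired graph on `S` -/
def Stable : Prop := ∀ v ∈ S, η v < degS a S out v

/-- ample for every nonempty subset of `S` -/
def Ample : Prop := ∀ F ⊆ S, F.Nonempty → ∃ x ∈ F, ∑ y ∈ F, a x y ≤ η x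

/-- recurrent configurations on the wired graph on `S` -/
def Recurrent : Prop := Stable a S out η ∧ Ample a S η

end Anchored

/-! Write `t v` for the number of steps after which `v` is burnt, so that the unburnt set after
`m` steps is `{v ∈ S | m < t v}`, and `P = |S| + 1` for the length of a phase. Within a phase the
burning rule is fixed, so a step at which nothing burns is followed by another; as a phase has more
steps than there are vertices, nothing burns at its last step. Consequently a vertex burning at the
first step of a phase does so because that phase releases it, and a vertex burning later has its
tree edge into the layer burnt one step earlier. The burning times therefore solve
`t v = max (t (parent v) + 1) (q v * P + 1)`, where phase `q v` releases `v`: a recursion along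
the tree with a unique solution: the tree determines the whole burning process and with it `η`. Conversely,
for a spanning tree the recursion is solved by well-founded recursion, and reading the burning rule
backwards produces a recurrent configuration with these burning times which is mapped to the tree.
That every recurrent configuration has an image is a count: the rank it prescribes is smaller than
the number of candidate edges. -/

namespace Anchored

variable {V : Type*}

theorem card_filter_lt_card {α : Type*} (r : α → α → Prop) [Std.Irrefl r] {s : Finset α}
    {x : α} (hx : x ∈ s) : (s.filter fun y => r y x).card < s.card :=
  Finset.card_lt_card (Finset.filter_ssubset.2 ⟨x, hx, irrefl x⟩)

theorem exists_card_filter_eq {α : Type*} (r : α → α → Prop) [IsStrictTotalOrder α r]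
    (s : Finset α) {ℓ : ℕ} (hℓ : ℓ < s.card) :
    ∃ x ∈ s, (s.filter fun y => r y x).card = ℓ := by
  set rank : α → ℕ := fun x => (s.filter fun y => r y x).card
  have hlt : ∀ {x y}, x ∈ s → r x y → rank x < rank y := by
    intro x y hx hxy
    refine Finset.card_lt_card <| (Finset.ssubset_iff_of_subset fun z hz => ?_).2
      ⟨x, Finset.mem_filter.2 ⟨hx, hxy⟩, fun h => irrefl_of r x (Finset.mem_filter.1 h).2⟩
    rw [Finset.mem_filter] at hz ⊢
    exact ⟨hz.1, _root_.trans_of r hz.2 hxy⟩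
  have hinj : Set.InjOn rank s := fun x hx y hy hrank => by
    rcases trichotomous_of r x y with h | h | h
    · exact absurd hrank (hlt hx h).ne
    · exact h
    · exact absurd hrank (hlt hy h).ne'
  have hrange : s.image rank = Finset.range s.card := by
    refine Finset.eq_of_subset_of_card_le (fun n hn => ?_) ?_
    · obtain ⟨x, hx, rfl⟩ := Finset.mem_image.1 hn
      exact Finset.mem_range.2 (card_filter_lt_card r hx)
    · rw [Finset.card_range, Finset.card_image_of_injOn hinj]
  obtain ⟨x, hx, hrank⟩ := Finset.mem_image.1 (hrange ▸ Finset.mem_range.2 hℓ)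
  exact ⟨x, hx, hrank⟩

theorem card_lt_plen (S : Finset V) : S.card < plen S := Nat.lt_succ_self _

theorem plen_pos (S : Finset V) : 0 < plen S := Nat.succ_pos _

theorem pred_div_plen {S : Finset V} {n : ℕ} (h : n % plen S ≠ 0) :
    (n - 1) / plen S = n / plen S := by
  obtain ⟨k, rfl⟩ :=
    Nat.exists_eq_succ_of_ne_zero (n := n) (by rintro rfl; exact h (Nat.zero_mod _))
  exact (Nat.succ_div_of_not_dvd fun hd => h (Nat.mod_eq_zero_of_dvd hd)).symm

section Schedules

variable (S : Finset V)

def unburnt (t : V → ℕ) (m : ℕ) : Finset V := S.filter fun u => m < t u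

/-- `(t v - 1) / plen S * plen S` is the first step of the phase in which `v` burns. -/
def Gapless (t : V → ℕ) (v : V) : Prop :=
  ∀ s, (t v - 1) / plen S * plen S < s → s ≤ t v → ∃ u ∈ S, t u = s

variable {S}

@[simp] theorem mem_unburnt {t : V → ℕ} {m : ℕ} {u : V} :
    u ∈ unburnt S t m ↔ u ∈ S ∧ m < t u :=
  Finset.mem_filter

theorem unburnt_subset (t : V → ℕ) (m : ℕ) : unburnt S t m ⊆ S :=
  Finset.filter_subset _ _

theorem unburnt_anti {t : V → ℕ} {m n : ℕ} (h : m ≤ n) : unburnt S t n ⊆ unburnt S t m :=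
  fun u hu => by
    rw [mem_unburnt] at hu ⊢
    exact ⟨hu.1, by omega⟩

theorem unburnt_congr {t₁ t₂ : V → ℕ} (h : ∀ v ∈ S, t₁ v = t₂ v) :
    unburnt S t₁ = unburnt S t₂ :=
  funext fun _ => Finset.filter_congr fun v hv => by rw [h v hv]

/-- A phase has `|S| + 1` steps, more than can all be busy. -/
theorem Gapless.mod_plen_ne_zero {t : V → ℕ} {v : V} (h : Gapless S t v) (hv : 1 ≤ t v) :
    t v % plen S ≠ 0 := by
  obtain ⟨q, hq⟩ : ∃ q, (t v - 1) / plen S = q := ⟨_, rfl⟩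
  have hstart : q * plen S ≤ t v - 1 := hq ▸ Nat.div_mul_le_self _ _
  have hwidth : t v - q * plen S ≤ S.card :=
    calc t v - q * plen S = (Finset.Ioc (q * plen S) (t v)).card := (Nat.card_Ioc _ _).symm
      _ ≤ (S.image t).card := Finset.card_le_card fun s hs => by
          rw [Finset.mem_Ioc] at hs
          obtain ⟨u, hu, rfl⟩ := h s (hq ▸ hs.1) hs.2
          exact Finset.mem_image_of_mem t hu
      _ ≤ S.card := Finset.card_image_le
  have hsplit : t v = (t v - q * plen S) + q * plen S := by omega
  have := card_lt_plen S
  rw [hsplit, Nat.add_mul_mod_self_right, Nat.mod_eq_of_lt (by omega)]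
  omega

theorem gapless_of_eq_mul_add_one {t : V → ℕ} {v : V} (hv : v ∈ S) {q : ℕ}
    (h : t v = q * plen S + 1) : Gapless S t v := by
  intro s hs₁ hs₂
  rw [h, Nat.add_sub_cancel, Nat.mul_div_cancel _ (plen_pos S)] at hs₁
  exact ⟨v, hv, by omega⟩

theorem Gapless.succ {t : V → ℕ} {v w : V} (hw : Gapless S t w) (hv : v ∈ S)
    (hwv : t v = t w + 1) (hmod : t w % plen S ≠ 0) : Gapless S t v := by
  intro s hs₁ hs₂
  rcases hs₂.eq_or_lt with rfl | hs₂
  · exact ⟨v, hv, rfl⟩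
  · rw [hwv, Nat.add_sub_cancel, ← pred_div_plen hmod] at hs₁
    exact hw s hs₁ (by omega)

end Schedules

theorem acc_of_iterP_eq_none {p : V → Option V} :
    ∀ m v, iterP p m v = none → Acc (fun w v => p v = some w) v
  | 0, _, h => absurd h (Option.some_ne_none _)
  | m + 1, v, h => Acc.intro v fun w hw => by
      rw [iterP, hw] at h
      exact acc_of_iterP_eq_none m w h

theorem exists_iterP_eq_none {p : V → Option V} (t : V → ℕ)
    (ht : ∀ v w, p v = some w → t w < t v) (v : V) : ∃ m, iterP p m v = none := by
  induction hv : t v using Nat.strong_induction_on generalizing v with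
  | _ n ih =>
    cases hp : p v with
    | none => exact ⟨1, by rw [iterP, hp]; rfl⟩
    | some w =>
      obtain ⟨m, hm⟩ := ih (t w) (hv ▸ ht v w hp) w rfl
      exact ⟨m + 1, by rw [iterP, hp]; exact hm⟩

section Release

variable (S : Finset V) (D : ℕ → Finset V) (kk : ℕ)

/-- Phase `q` (counted from `0`) protects `D (kk - q)`. -/
noncomputable def releasePhase (v : V) : ℕ := sInf {q | v ∉ D (kk - q)}

noncomputable def releaseTime (v : V) : ℕ := releasePhase D kk v * plen S + 1

variable {S D kk}

theorem notMem_D_releasePhase (hD0 : D 0 = ∅) (v : V) : v ∉ D (kk - releasePhase D kk v) :=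
  Nat.sInf_mem (s := {q | v ∉ D (kk - q)}) ⟨kk, by simp [hD0]⟩

theorem notMem_iff_releasePhase_le (hmono : Monotone D) (hD0 : D 0 = ∅) {v : V} {j : ℕ} :
    v ∉ D (kk - j) ↔ releasePhase D kk v ≤ j :=
  ⟨fun h => Nat.sInf_le h, fun h hv =>
    notMem_D_releasePhase hD0 v (hmono (Nat.sub_le_sub_left h kk) hv)⟩

theorem mem_D_iff_lt_releaseTime (hmono : Monotone D) (hD0 : D 0 = ∅) {v : V} {m : ℕ} :
    v ∈ D (kk - m / plen S) ↔ m + 1 < releaseTime S D kk v := by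
  rw [← not_iff_not, notMem_iff_releasePhase_le hmono hD0, Nat.le_div_iff_mul_le (plen_pos S),
    releaseTime]
  omega

theorem releaseTime_sub_one_mod (v : V) : (releaseTime S D kk v - 1) % plen S = 0 := by
  rw [releaseTime, Nat.add_sub_cancel, Nat.mul_mod_left]

end Release

section Trees

variable [DecidableEq V] {S : Finset V} {e : V → Option (V × ℕ)}

theorem par_eq_of_eq_some {v : V} {ed : V × ℕ} (he : e v = some ed) :
    par S e v = if ed.1 ∈ S then some ed.1 else none := by
  simp only [par, he, Option.bind_some]

theorem par_eq_none_of_eq_none {v : V} (he : e v = none) : par S e v = none := by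
  simp only [par, he, Option.bind_none]

theorem mem_of_par_eq_some {v w : V} (h : par S e v = some w) : w ∈ S := by
  cases he : e v with
  | none => simp [par_eq_none_of_eq_none he] at h
  | some ed =>
    rw [par_eq_of_eq_some he] at h
    split_ifs at h with hS
    exact Option.some_injective _ h ▸ hS

theorem IsSpanningTree.wellFounded {a : V → V → ℕ} {out : V → Finset V}
    (hT : IsSpanningTree a S out e) : WellFounded fun w v => par S e v = some w := by
  refine ⟨fun v => ?_⟩
  by_cases hv : v ∈ S
  · obtain ⟨m, hm⟩ := hT.2.2 v hv
    exact acc_of_iterP_eq_none m v hm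
  · exact acc_of_iterP_eq_none 1 v (by rw [iterP, par_eq_none_of_eq_none (hT.1 v hv)]; rfl)

variable (S) (D : ℕ → Finset V) (kk : ℕ)

/-- The sink (`par S e v = none`) counts as burnt at time `0`. -/
def parentTime (e : V → Option (V × ℕ)) (t : V → ℕ) (v : V) : ℕ :=
  ((par S e v).map t).getD 0

def IsSchedule (e : V → Option (V × ℕ)) (t : V → ℕ) : Prop :=
  ∀ v ∈ S, t v = max (parentTime S e t v + 1) (releaseTime S D kk v)

variable {S D kk}

theorem parentTime_of_eq_some {t : V → ℕ} {v : V} {ed : V × ℕ} (he : e v = some ed) :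
    parentTime S e t v = if ed.1 ∈ S then t ed.1 else 0 := by
  rw [parentTime, par_eq_of_eq_some he]
  split_ifs <;> rfl

theorem exists_isSchedule (hwf : WellFounded fun w v => par S e v = some w) :
    ∃ t, IsSchedule S D kk e t :=
  ⟨hwf.fix fun v rec => max (((par S e v).pmap rec fun _ h => h).getD 0 + 1)
      (releaseTime S D kk v),
    fun v _ => by rw [WellFounded.fix_eq, Option.pmap_eq_map]; rfl⟩

namespace IsSchedule

variable {t : V → ℕ}

theorem releaseTime_le (ht : IsSchedule S D kk e t) {v : V} (hv : v ∈ S) :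
    releaseTime S D kk v ≤ t v :=
  ht v hv ▸ le_max_right _ _

theorem one_le (ht : IsSchedule S D kk e t) {v : V} (hv : v ∈ S) : 1 ≤ t v :=
  le_trans (Nat.le_add_left _ _) (ht.releaseTime_le hv)

theorem lt_of_par_eq_some (ht : IsSchedule S D kk e t) {v w : V} (hv : v ∈ S)
    (h : par S e v = some w) : t w < t v := by
  have := ht v hv
  simp only [parentTime, h, Option.map_some, Option.getD_some] at this
  omega

theorem eq_releaseTime_or (ht : IsSchedule S D kk e t) {v : V} (hv : v ∈ S) :
    t v = releaseTime S D kk v ∨ ∃ w, par S e v = some w ∧ t v = t w + 1 := by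
  have h := ht v hv
  cases hp : par S e v with
  | none =>
    simp only [parentTime, hp, Option.map_none, Option.getD_none] at h
    exact Or.inl (h.trans (max_eq_right (Nat.le_add_left _ _)))
  | some w =>
    simp only [parentTime, hp, Option.map_some, Option.getD_some] at h
    rcases max_choice (t w + 1) (releaseTime S D kk v) with hm | hm
    · exact Or.inr ⟨w, rfl, h.trans hm⟩
    · exact Or.inl (h.trans hm)

theorem eqOn {t' : V → ℕ} (ht : IsSchedule S D kk e t) (ht' : IsSchedule S D kk e t') :
    ∀ v ∈ S, t v = t' v := by
  intro v hv
  induction hn : t v using Nat.strong_induction_on generalizing v with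
  | _ n ih =>
    subst hn
    rw [ht v hv, ht' v hv]
    cases hp : par S e v with
    | none => simp only [parentTime, hp, Option.map_none]
    | some w =>
      simp only [parentTime, hp, Option.map_some, Option.getD_some]
      rw [ih (t w) (ht.lt_of_par_eq_some hv hp) w (mem_of_par_eq_some hp) rfl]

theorem gapless (ht : IsSchedule S D kk e t) : ∀ v ∈ S, Gapless S t v := by
  intro v hv
  induction hn : t v using Nat.strong_induction_on generalizing v with
  | _ n ih =>
    subst hn
    rcases ht.eq_releaseTime_or hv with h | ⟨w, hp, h⟩
    · exact gapless_of_eq_mul_add_one hv h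
    · have hw := mem_of_par_eq_some hp
      have hgw := ih (t w) (by omega) w hw rfl
      exact hgw.succ hv h (hgw.mod_plen_ne_zero (ht.one_le hw))

theorem eq_releaseTime_of_mod_eq_zero (ht : IsSchedule S D kk e t) {v : V} (hv : v ∈ S)
    (hmod : (t v - 1) % plen S = 0) : t v = releaseTime S D kk v := by
  refine (ht.eq_releaseTime_or hv).resolve_right ?_
  rintro ⟨w, hp, h⟩
  have hw := mem_of_par_eq_some hp
  rw [h, Nat.add_sub_cancel] at hmod
  exact (ht.gapless w hw).mod_plen_ne_zero (ht.one_le hw) hmod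

theorem exists_par_of_mod_ne_zero (ht : IsSchedule S D kk e t) {v : V} (hv : v ∈ S)
    (hmod : (t v - 1) % plen S ≠ 0) : ∃ w, par S e v = some w ∧ t v = t w + 1 := by
  refine (ht.eq_releaseTime_or hv).resolve_left fun h => hmod ?_
  rw [h]
  exact releaseTime_sub_one_mod v

end IsSchedule

end Trees

section Candidates

variable [DecidableEq V] {a : V → V → ℕ} {S : Finset V} {out : V → Finset V}

theorem mem_edgesTo {v : V} {T : Finset V} {p : V × ℕ} :
    p ∈ edgesTo a v T ↔ p.1 ∈ T ∧ p.2 < a v p.1 := by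
  simp only [edgesTo, Finset.mem_biUnion, Finset.mem_image, Finset.mem_range]
  constructor
  · rintro ⟨w, hw, i, hi, rfl⟩
    exact ⟨hw, hi⟩
  · rintro ⟨h1, h2⟩
    exact ⟨p.1, h1, p.2, h2, rfl⟩

theorem card_edgesTo (v : V) (T : Finset V) : (edgesTo a v T).card = ∑ w ∈ T, a v w := by
  rw [edgesTo, Finset.card_biUnion]
  · exact Finset.sum_congr rfl fun w _ => by
      rw [Finset.card_image_of_injective _ fun i j h => (Prod.mk.inj h).2, Finset.card_range]
  · intro x _ y _ hxy
    simp only [Finset.disjoint_left, Finset.mem_image]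
    rintro p ⟨i, -, rfl⟩ ⟨j, -, h⟩
    exact hxy (congrArg Prod.fst h).symm

theorem edgesTo_union (v : V) (T T' : Finset V) :
    edgesTo a v (T ∪ T') = edgesTo a v T ∪ edgesTo a v T' :=
  Finset.union_biUnion

variable (S out) in
def candHeads (t : V → ℕ) (v : V) : Finset V :=
  if (t v - 1) % plen S = 0 then out v ∪ (S \ unburnt S t (t v - 1))
  else unburnt S t (t v - 2) \ unburnt S t (t v - 1)

variable {t : V → ℕ} {v w : V}

theorem mem_or_mem_of_mem_candHeads (hw : w ∈ candHeads S out t v) : w ∈ S ∨ w ∈ out v := by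
  unfold candHeads at hw
  split_ifs at hw
  · rcases Finset.mem_union.1 hw with h | h
    · exact Or.inr h
    · exact Or.inl (Finset.mem_sdiff.1 h).1
  · exact Or.inl (unburnt_subset t _ (Finset.mem_sdiff.1 hw).1)

theorem lt_of_mem_candHeads (hout : Disjoint (out v) S) (hv : 1 ≤ t v)
    (hw : w ∈ candHeads S out t v) (hwS : w ∈ S) : t w < t v := by
  have hburnt : w ∉ unburnt S t (t v - 1) := by
    unfold candHeads at hw
    split_ifs at hw
    · rcases Finset.mem_union.1 hw with h | h
      · exact absurd hwS (Finset.disjoint_left.1 hout h)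
      · exact (Finset.mem_sdiff.1 h).2
    · exact (Finset.mem_sdiff.1 hw).2
  rw [mem_unburnt, not_and, not_lt] at hburnt
  have := hburnt hwS
  omega

theorem eq_pred_of_mem_candHeads (hmod : (t v - 1) % plen S ≠ 0)
    (hw : w ∈ candHeads S out t v) : w ∈ S ∧ t w = t v - 1 := by
  rw [candHeads, if_neg hmod, Finset.mem_sdiff, mem_unburnt, mem_unburnt] at hw
  obtain ⟨⟨hwS, hlt⟩, hge⟩ := hw
  have : ¬t v - 1 < t w := fun h => hge ⟨hwS, h⟩
  have : t v - 1 ≠ 0 := fun h => hmod (by rw [h, Nat.zero_mod])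
  exact ⟨hwS, by omega⟩

variable (a) in
theorem sum_candHeads_of_mod_eq_zero (hout : Disjoint (out v) S)
    (hmod : (t v - 1) % plen S = 0) :
    ∑ w ∈ candHeads S out t v, a v w + ∑ w ∈ unburnt S t (t v - 1), a v w =
      degS a S out v := by
  rw [candHeads, if_pos hmod, Finset.sum_union (hout.mono_right Finset.sdiff_subset), add_assoc,
    Finset.sum_sdiff (unburnt_subset t _), degS, sk]

variable (a) in
theorem sum_candHeads_of_mod_ne_zero (hmod : (t v - 1) % plen S ≠ 0) :
    ∑ w ∈ candHeads S out t v, a v w + ∑ w ∈ unburnt S t (t v - 1), a v w =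
      ∑ w ∈ unburnt S t (t v - 2), a v w := by
  rw [candHeads, if_neg hmod, Finset.sum_sdiff (unburnt_anti (by omega))]

variable (a) in
theorem sum_candHeads_add_le (hout : Disjoint (out v) S) :
    ∑ w ∈ candHeads S out t v, a v w + ∑ w ∈ unburnt S t (t v - 1), a v w ≤ degS a S out v := by
  by_cases hmod : (t v - 1) % plen S = 0
  · exact (sum_candHeads_of_mod_eq_zero a hout hmod).le
  · rw [sum_candHeads_of_mod_ne_zero a hmod, degS]
    exact (Finset.sum_le_sum_of_subset (unburnt_subset t _)).trans (Nat.le_add_left _ _)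

theorem IsSchedule.mem_candHeads {D : ℕ → Finset V} {kk : ℕ} {e : V → Option (V × ℕ)}
    (ht : IsSchedule S D kk e t) (hv : v ∈ S) {i : ℕ} (he : e v = some (w, i))
    (hw : w ∈ S ∨ w ∈ out v) : w ∈ candHeads S out t v := by
  have hpar : par S e v = if w ∈ S then some w else none := par_eq_of_eq_some he
  by_cases hmod : (t v - 1) % plen S = 0
  · rw [candHeads, if_pos hmod, Finset.mem_union, Finset.mem_sdiff, mem_unburnt]
    by_cases hwS : w ∈ S
    · rw [if_pos hwS] at hpar
      have := ht.lt_of_par_eq_some hv hpar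
      exact Or.inr ⟨hwS, fun h => by omega⟩
    · exact Or.inl (hw.resolve_left hwS)
  · obtain ⟨w', hpar', hvw'⟩ := ht.exists_par_of_mod_ne_zero hv hmod
    have hwS : w ∈ S := by
      by_contra hwS
      rw [if_neg hwS] at hpar
      exact absurd (hpar.symm.trans hpar') (Option.some_ne_none _).symm
    rw [if_pos hwS, hpar', Option.some_inj] at hpar
    subst hpar
    have : t v - 1 ≠ 0 := fun h => hmod (by rw [h, Nat.zero_mod])
    rw [candHeads, if_neg hmod, Finset.mem_sdiff, mem_unburnt, mem_unburnt]
    exact ⟨⟨hwS, by omega⟩, fun h => by omega⟩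

end Candidates

section Burning

variable [DecidableEq V] {a : V → V → ℕ} {S : Finset V} {η : V → ℕ} {D : ℕ → Finset V}
  {kk : ℕ}

theorem mem_U_succ {m : ℕ} {v : V} :
    v ∈ U a S η D kk (m + 1) ↔ v ∈ U a S η D kk m ∧
      (v ∈ D (kk - m / plen S) ∨ η v < ∑ w ∈ U a S η D kk m, a v w) :=
  Finset.mem_filter

variable (a S η D kk) in
theorem U_subset : ∀ m, U a S η D kk m ⊆ S
  | 0 => subset_rfl
  | m + 1 => (Finset.filter_subset _ _).trans (U_subset m)

variable (a S η D kk) in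
theorem U_antitone : Antitone (U a S η D kk) :=
  antitone_nat_of_succ_le fun _ => Finset.filter_subset _ _

theorem U_succ_succ_eq {m : ℕ} (hdiv : (m + 1) / plen S = m / plen S)
    (h : U a S η D kk (m + 1) = U a S η D kk m) :
    U a S η D kk (m + 2) = U a S η D kk (m + 1) :=
  calc U a S η D kk (m + 2)
      = (U a S η D kk (m + 1)).filter fun v =>
          v ∈ D (kk - (m + 1) / plen S) ∨ η v < ∑ w ∈ U a S η D kk (m + 1), a v w := rfl
    _ = (U a S η D kk m).filter fun v =>
          v ∈ D (kk - m / plen S) ∨ η v < ∑ w ∈ U a S η D kk m, a v w := by rw [h, hdiv]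
    _ = U a S η D kk (m + 1) := rfl

theorem tau_eq_of_U_eq_unburnt {t : V → ℕ} (h : U a S η D kk = unburnt S t) {v : V}
    (hv : v ∈ S) : τ a S η D kk v = t v := by
  have hset : {m | v ∉ U a S η D kk m} = Set.Ici (t v) := by
    ext m
    simp [h, hv]
  rw [τ, hset, csInf_Ici]

/-- In the last phase nothing is protected, so ampleness burns a vertex at every step. -/
theorem card_U_le (hD0 : D 0 = ∅) (hA : Ample a S η) (j : ℕ) :
    (U a S η D kk (kk * plen S + j)).card ≤ S.card - j := by
  induction j with
  | zero => exact Finset.card_le_card (U_subset a S η D kk _)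
  | succ j ih =>
    rcases (U a S η D kk (kk * plen S + j)).eq_empty_or_nonempty with hempty | hne
    · rw [← add_assoc, Finset.card_eq_zero.2 (Finset.subset_empty.1
        (hempty ▸ U_antitone a S η D kk (Nat.le_add_right _ 1)))]
      exact Nat.zero_le _
    · obtain ⟨x, hx, hηx⟩ := hA _ (U_subset a S η D kk _) hne
      have hfree : kk - (kk * plen S + j) / plen S = 0 := by
        rw [Nat.mul_comm, Nat.mul_add_div (plen_pos S)]
        exact Nat.sub_eq_zero_of_le (Nat.le_add_right _ _)
      have hburn : x ∉ U a S η D kk (kk * plen S + j + 1) := by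
        rw [mem_U_succ, hfree, hD0]
        exact fun h => (h.2.resolve_left (Finset.notMem_empty x)).not_ge hηx
      have := Finset.card_lt_card (Finset.ssubset_iff_subset_ne.2
        ⟨U_antitone a S η D kk (Nat.le_add_right (kk * plen S + j) 1), fun h => hburn (h ▸ hx)⟩)
      rw [← add_assoc]
      omega

theorem U_eq_empty (hD0 : D 0 = ∅) (hA : Ample a S η) :
    U a S η D kk (kk * plen S + S.card) = ∅ :=
  Finset.card_eq_zero.1 (Nat.le_zero.1 ((card_U_le hD0 hA _).trans (Nat.sub_self _).le))

theorem notMem_U_tau (hD0 : D 0 = ∅) (hA : Ample a S η) (v : V) :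
    v ∉ U a S η D kk (τ a S η D kk v) :=
  Nat.sInf_mem (s := {m | v ∉ U a S η D kk m})
    ⟨_, by rw [Set.mem_ofPred_eq, U_eq_empty hD0 hA]; exact Finset.notMem_empty v⟩

theorem mem_U_iff (hD0 : D 0 = ∅) (hA : Ample a S η) {v : V} {m : ℕ} :
    v ∈ U a S η D kk m ↔ v ∈ S ∧ m < τ a S η D kk v := by
  refine ⟨fun h => ⟨U_subset a S η D kk m h, lt_of_not_ge fun hle =>
    notMem_U_tau hD0 hA v (U_antitone a S η D kk hle h)⟩, fun h => ?_⟩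
  by_contra hv
  exact (Nat.sInf_le hv).not_gt h.2

theorem U_eq_unburnt (hD0 : D 0 = ∅) (hA : Ample a S η) :
    U a S η D kk = unburnt S (τ a S η D kk) :=
  funext fun _ => Finset.ext fun _ => by rw [mem_U_iff hD0 hA, mem_unburnt]

theorem one_le_tau (hD0 : D 0 = ∅) (hA : Ample a S η) {v : V} (hv : v ∈ S) :
    1 ≤ τ a S η D kk v :=
  ((mem_U_iff (m := 0) hD0 hA).1 hv).2

theorem burns_at_tau (hD0 : D 0 = ∅) (hA : Ample a S η) {v : V} (hv : v ∈ S) :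
    v ∉ D (kk - (τ a S η D kk v - 1) / plen S) ∧
      ∑ w ∈ U a S η D kk (τ a S η D kk v - 1), a v w ≤ η v := by
  have h := notMem_U_tau (kk := kk) hD0 hA v
  have h1 := one_le_tau (kk := kk) hD0 hA hv
  rw [show τ a S η D kk v = τ a S η D kk v - 1 + 1 by omega, mem_U_succ] at h
  push Not at h
  exact h ((mem_U_iff hD0 hA).2 ⟨hv, by omega⟩)

theorem exists_tau_eq_pred (hD0 : D 0 = ∅) (hA : Ample a S η) {v : V} (hv : v ∈ S)
    (hmod : (τ a S η D kk v - 1) % plen S ≠ 0) :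
    ∃ u ∈ S, τ a S η D kk u = τ a S η D kk v - 1 := by
  by_contra! hnone
  have h1 : τ a S η D kk v - 1 ≠ 0 := fun h => hmod (by rw [h, Nat.zero_mod])
  obtain ⟨n, hn⟩ : ∃ n, τ a S η D kk v = n + 2 := ⟨τ a S η D kk v - 2, by omega⟩
  rw [hn, show n + 2 - 1 = n + 1 by omega] at hmod hnone
  have hstall : U a S η D kk (n + 1) = U a S η D kk n := by
    rw [U_eq_unburnt hD0 hA]
    refine Finset.ext fun u => ?_
    rw [mem_unburnt, mem_unburnt]
    exact ⟨fun h => ⟨h.1, by omega⟩, fun h => ⟨h.1, by have := hnone u h.1; omega⟩⟩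
  have hdiv : (n + 1) / plen S = n / plen S := (pred_div_plen hmod).symm
  have hv1 : v ∈ U a S η D kk (n + 1) := (mem_U_iff hD0 hA).2 ⟨hv, by omega⟩
  have := notMem_U_tau (kk := kk) hD0 hA v
  rw [hn, U_succ_succ_eq hdiv hstall] at this
  exact this hv1

theorem tau_gapless (hD0 : D 0 = ∅) (hA : Ample a S η) :
    ∀ v ∈ S, Gapless S (τ a S η D kk) v := by
  intro v hv
  induction hn : τ a S η D kk v using Nat.strong_induction_on generalizing v with
  | _ n ih =>
    subst hn
    by_cases hmod : (τ a S η D kk v - 1) % plen S = 0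
    · refine gapless_of_eq_mul_add_one hv (q := (τ a S η D kk v - 1) / plen S) ?_
      rw [Nat.div_mul_cancel (Nat.dvd_of_mod_eq_zero hmod)]
      have := one_le_tau (kk := kk) hD0 hA hv
      omega
    · obtain ⟨u, hu, hτu⟩ := exists_tau_eq_pred hD0 hA hv hmod
      have := one_le_tau (kk := kk) hD0 hA hv
      exact (ih _ (by omega) u hu rfl).succ hv (by omega) (hτu ▸ hmod)

theorem U_succ_eq_of_mod_eq_zero (hD0 : D 0 = ∅) (hA : Ample a S η) {m : ℕ}
    (hm : (m + 1) % plen S = 0) : U a S η D kk (m + 1) = U a S η D kk m := by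
  rw [U_eq_unburnt hD0 hA]
  refine Finset.ext fun u => ?_
  rw [mem_unburnt, mem_unburnt]
  refine ⟨fun h => ⟨h.1, by omega⟩, fun h => ⟨h.1, lt_of_le_of_ne h.2 fun heq => ?_⟩⟩
  exact (tau_gapless hD0 hA u h.1).mod_plen_ne_zero (by omega) (heq ▸ hm)

theorem releaseTime_le_tau (hmono : Monotone D) (hD0 : D 0 = ∅) (hA : Ample a S η) {v : V}
    (hv : v ∈ S) : releaseTime S D kk v ≤ τ a S η D kk v := by
  have hq := (notMem_iff_releasePhase_le hmono hD0).1 (burns_at_tau (kk := kk) hD0 hA hv).1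
  have := Nat.mul_le_mul_right (plen S) hq
  have := Nat.div_mul_le_self (τ a S η D kk v - 1) (plen S)
  have := one_le_tau (kk := kk) hD0 hA hv
  rw [releaseTime]
  omega

theorem tau_eq_releaseTime_of_mod_eq_zero (hmono : Monotone D) (hD0 : D 0 = ∅)
    (hA : Ample a S η) {v : V} (hv : v ∈ S) (hmod : (τ a S η D kk v - 1) % plen S = 0) :
    τ a S η D kk v = releaseTime S D kk v := by
  obtain ⟨c, hc⟩ : ∃ c, τ a S η D kk v - 1 = c * plen S :=
    ⟨_, (Nat.div_mul_cancel (Nat.dvd_of_mod_eq_zero hmod)).symm⟩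
  have h1 := one_le_tau (kk := kk) hD0 hA hv
  have hburn := burns_at_tau (kk := kk) hD0 hA hv
  rw [hc, Nat.mul_div_cancel _ (plen_pos S)] at hburn
  have hle : releasePhase D kk v ≤ c := (notMem_iff_releasePhase_le hmono hD0).1 hburn.1
  suffices c ≤ releasePhase D kk v by rw [releaseTime, le_antisymm hle this]; omega
  obtain _ | c' := c
  · exact Nat.zero_le _
  have hP := plen_pos S
  have hmul : (c' + 1) * plen S = c' * plen S + plen S := Nat.succ_mul _ _
  have hstep : (c' + 1) * plen S - 1 + 1 = (c' + 1) * plen S := by omega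
  have hdiv : ((c' + 1) * plen S - 1) / plen S = c' :=
    Nat.div_eq_of_lt_le (by omega) (by omega)
  have hU : U a S η D kk ((c' + 1) * plen S - 1) = U a S η D kk ((c' + 1) * plen S) := by
    rw [← U_succ_eq_of_mod_eq_zero hD0 hA (by rw [hstep]; exact Nat.mul_mod_left _ _), hstep]
  have hstay : v ∈ U a S η D kk ((c' + 1) * plen S - 1 + 1) := by
    rw [hstep, ← hc]
    exact (mem_U_iff hD0 hA).2 ⟨hv, by omega⟩
  rw [mem_U_succ, hdiv, hU] at hstay
  rcases hstay.2 with hprot | hlt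
  · by_contra! hlt
    exact (notMem_iff_releasePhase_le hmono hD0).2 (by omega) hprot
  · exact absurd hburn.2 (not_le.2 hlt)

theorem lt_sum_U_of_mod_ne_zero (hD0 : D 0 = ∅) (hA : Ample a S η) {v : V} (hv : v ∈ S)
    (hmod : (τ a S η D kk v - 1) % plen S ≠ 0) :
    η v < ∑ w ∈ U a S η D kk (τ a S η D kk v - 2), a v w := by
  have h1 : τ a S η D kk v - 1 ≠ 0 := fun h => hmod (by rw [h, Nat.zero_mod])
  have hdiv : (τ a S η D kk v - 2) / plen S = (τ a S η D kk v - 1) / plen S := by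
    rw [← pred_div_plen hmod, Nat.sub_sub]
  have hstay : v ∈ U a S η D kk (τ a S η D kk v - 2 + 1) := (mem_U_iff hD0 hA).2 ⟨hv, by omega⟩
  rw [mem_U_succ, hdiv] at hstay
  exact hstay.2.resolve_left (burns_at_tau hD0 hA hv).1

end Burning

section Spec

variable [DecidableEq V] {a : V → V → ℕ} {S : Finset V} {out : V → Finset V} {η : V → ℕ}
  {D : ℕ → Finset V} {kk : ℕ} {prec : V → (V × ℕ) → (V × ℕ) → Prop}
  {e : V → Option (V × ℕ)}

theorem mv_add_sum_U (v : V) :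
    mv a S out η D kk v + ∑ w ∈ U a S η D kk (τ a S η D kk v - 1), a v w =
      degS a S out v := by
  rw [mv, degS, add_assoc, Finset.sum_sdiff (U_subset a S η D kk _)]

theorem Fv_eq_edgesTo {t : V → ℕ} (hU : U a S η D kk = unburnt S t) {v : V}
    (hτ : τ a S η D kk v = t v) : Fv a S out η D kk v = edgesTo a v (candHeads S out t v) := by
  rw [Fv, candHeads, hU, hτ]
  split_ifs
  · exact (edgesTo_union v _ _).symm
  · rfl

theorem sub_sum_U_lt_card_Fv (hD0 : D 0 = ∅) (hR : Recurrent a S out η) {v : V} (hv : v ∈ S)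
    (hout : Disjoint (out v) S) :
    η v - ∑ w ∈ U a S η D kk (τ a S η D kk v - 1), a v w < (Fv a S out η D kk v).card := by
  have hburn := (burns_at_tau (kk := kk) hD0 hR.2 hv).2
  rw [Fv_eq_edgesTo (U_eq_unburnt hD0 hR.2) rfl, card_edgesTo]
  rw [U_eq_unburnt hD0 hR.2] at hburn ⊢
  by_cases hmod : (τ a S η D kk v - 1) % plen S = 0
  · have := sum_candHeads_of_mod_eq_zero a hout hmod
    have := hR.1 v hv
    omega
  · have := sum_candHeads_of_mod_ne_zero a (out := out) hmod
    have := lt_sum_U_of_mod_ne_zero hD0 hR.2 hv hmod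
    rw [U_eq_unburnt hD0 hR.2] at this
    omega

theorem exists_spec (hD0 : D 0 = ∅) (hR : Recurrent a S out η)
    (hprec : ∀ v, IsStrictTotalOrder (V × ℕ) (prec v)) (hout : ∀ v, Disjoint (out v) S) :
    ∃ e, Spec a S out η D kk prec e := by
  have hrank : ∀ v ∈ S, ∃ ed ∈ Fv a S out η D kk v, η v + mv a S out η D kk v =
      degS a S out v + ((Fv a S out η D kk v).filter fun f => prec v f ed).card := by
    intro v hv
    have := hprec v
    obtain ⟨ed, hed, hcard⟩ :=
      exists_card_filter_eq (prec v) _ (sub_sum_U_lt_card_Fv hD0 hR hv (hout v))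
    refine ⟨ed, hed, ?_⟩
    have := mv_add_sum_U (a := a) (S := S) (out := out) (η := η) (D := D) (kk := kk) v
    have := (burns_at_tau (kk := kk) hD0 hR.2 hv).2
    omega
  choose! f hf using hrank
  exact ⟨fun v => if v ∈ S then some (f v) else none, fun v hv => if_neg hv,
    fun v hv => ⟨f v, if_pos hv, hf v hv⟩⟩

theorem Spec.isSchedule (hmono : Monotone D) (hD0 : D 0 = ∅) (hA : Ample a S η)
    (hout : ∀ v, Disjoint (out v) S) (hspec : Spec a S out η D kk prec e) :
    IsSchedule S D kk e (τ a S η D kk) := by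
  intro v hv
  obtain ⟨ed, he, hed, -⟩ := hspec.2 v hv
  rw [Fv_eq_edgesTo (U_eq_unburnt hD0 hA) rfl, mem_edgesTo] at hed
  rw [parentTime_of_eq_some he]
  have hrel := releaseTime_le_tau (kk := kk) hmono hD0 hA hv
  have hpos := one_le_tau (kk := kk) hD0 hA hv
  by_cases hmod : (τ a S η D kk v - 1) % plen S = 0
  · have hpar : (if ed.1 ∈ S then τ a S η D kk ed.1 else 0) < τ a S η D kk v := by
      split_ifs with hS'
      · exact lt_of_mem_candHeads (hout v) hpos hed.1 hS'
      · exact hpos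
    have hτ := tau_eq_releaseTime_of_mod_eq_zero hmono hD0 hA hv hmod
    rw [max_eq_right (by omega), hτ]
  · obtain ⟨hS', heq⟩ := eq_pred_of_mem_candHeads hmod hed.1
    rw [if_pos hS', heq, Nat.sub_add_cancel hpos, max_eq_left hrel]

theorem Spec.isSpanningTree (hmono : Monotone D) (hD0 : D 0 = ∅) (hA : Ample a S η)
    (hout : ∀ v, Disjoint (out v) S) (hspec : Spec a S out η D kk prec e) :
    IsSpanningTree a S out e := by
  refine ⟨hspec.1, fun v hv => ?_, fun v _ => exists_iterP_eq_none (τ a S η D kk) ?_ v⟩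
  · obtain ⟨ed, he, hed, -⟩ := hspec.2 v hv
    rw [Fv_eq_edgesTo (U_eq_unburnt hD0 hA) rfl, mem_edgesTo] at hed
    exact ⟨ed.1, ed.2, he, hed.2, mem_or_mem_of_mem_candHeads hed.1⟩
  · intro v w hp
    by_cases hv : v ∈ S
    · exact (hspec.isSchedule hmono hD0 hA hout).lt_of_par_eq_some hv hp
    · rw [par_eq_none_of_eq_none (hspec.1 v hv)] at hp
      cases hp

theorem eq_of_spec (hmono : Monotone D) (hD0 : D 0 = ∅) (hout : ∀ v, Disjoint (out v) S)
    {η₁ η₂ : V → ℕ} (hR₁ : Recurrent a S out η₁) (hR₂ : Recurrent a S out η₂)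
    (h₁ : Spec a S out η₁ D kk prec e) (h₂ : Spec a S out η₂ D kk prec e) :
    ∀ v ∈ S, η₁ v = η₂ v := by
  have hτ := (h₁.isSchedule hmono hD0 hR₁.2 hout).eqOn (h₂.isSchedule hmono hD0 hR₂.2 hout)
  have hU : U a S η₁ D kk = U a S η₂ D kk := by
    rw [U_eq_unburnt hD0 hR₁.2, U_eq_unburnt hD0 hR₂.2, unburnt_congr hτ]
  intro v hv
  obtain ⟨ed, he, -, h₁v⟩ := h₁.2 v hv
  obtain ⟨ed', he', -, h₂v⟩ := h₂.2 v hv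
  obtain rfl : ed = ed' := Option.some_injective _ (he.symm.trans he')
  have hFv : Fv a S out η₁ D kk v = Fv a S out η₂ D kk v := by simp only [Fv, hU, hτ v hv]
  have hmv : mv a S out η₁ D kk v = mv a S out η₂ D kk v := by simp only [mv, hU, hτ v hv]
  rw [hFv, hmv] at h₁v
  omega

end Spec

section Inverse

variable [DecidableEq V] {a : V → V → ℕ} {S : Finset V} {out : V → Finset V}
  {D : ℕ → Finset V} {kk : ℕ} {prec : V → (V × ℕ) → (V × ℕ) → Prop}
  {e : V → Option (V × ℕ)} {t : V → ℕ}

variable (a S out prec) in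
/-- The inverse of the burning map, once the burning times `t` are read off the tree `e`. -/
noncomputable def configOf (e : V → Option (V × ℕ)) (t : V → ℕ) (v : V) : ℕ :=
  ∑ w ∈ unburnt S t (t v - 1), a v w +
    ((edgesTo a v (candHeads S out t v)).filter fun f => prec v f ((e v).getD (v, 0))).card

theorem IsSchedule.getD_mem_edgesTo (hT : IsSpanningTree a S out e) (ht : IsSchedule S D kk e t)
    {v : V} (hv : v ∈ S) :
    e v = some ((e v).getD (v, 0)) ∧ (e v).getD (v, 0) ∈ edgesTo a v (candHeads S out t v) := by
  obtain ⟨w, i, he, hi, hw⟩ := hT.2.1 v hv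
  rw [he]
  exact ⟨rfl, mem_edgesTo.2 ⟨ht.mem_candHeads hv he hw, hi⟩⟩

variable (a S out prec e t) in
theorem sum_unburnt_le_configOf (v : V) :
    ∑ w ∈ unburnt S t (t v - 1), a v w ≤ configOf a S out prec e t v :=
  Nat.le_add_right _ _

theorem configOf_lt (hprec : ∀ v, IsStrictTotalOrder (V × ℕ) (prec v))
    (hT : IsSpanningTree a S out e) (ht : IsSchedule S D kk e t) {v : V} (hv : v ∈ S) :
    configOf a S out prec e t v <
      ∑ w ∈ candHeads S out t v, a v w + ∑ w ∈ unburnt S t (t v - 1), a v w := by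
  have := hprec v
  rw [← card_edgesTo, add_comm]
  exact Nat.add_lt_add_left (card_filter_lt_card (prec v) (ht.getD_mem_edgesTo hT hv).2) _

theorem recurrent_configOf (hprec : ∀ v, IsStrictTotalOrder (V × ℕ) (prec v))
    (hout : ∀ v, Disjoint (out v) S) (hT : IsSpanningTree a S out e)
    (ht : IsSchedule S D kk e t) : Recurrent a S out (configOf a S out prec e t) := by
  refine ⟨fun v hv => (configOf_lt hprec hT ht hv).trans_le
    (sum_candHeads_add_le a (hout v)), fun F hF hne => ?_⟩
  obtain ⟨x, hx, hmin⟩ := F.exists_min_image t hne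
  refine ⟨x, hx, le_trans (Finset.sum_le_sum_of_subset fun y hy => ?_)
    (sum_unburnt_le_configOf a S out prec e t x)⟩
  have := ht.one_le (hF hx)
  exact mem_unburnt.2 ⟨hF hy, by have := hmin y hy; omega⟩

theorem configOf_lt_sum_unburnt (hprec : ∀ v, IsStrictTotalOrder (V × ℕ) (prec v))
    (hT : IsSpanningTree a S out e) (ht : IsSchedule S D kk e t) {v : V} (hv : v ∈ S)
    (hrel : t v ≠ releaseTime S D kk v) :
    configOf a S out prec e t v < ∑ w ∈ unburnt S t (t v - 2), a v w := by
  have hmod : (t v - 1) % plen S ≠ 0 := fun h => hrel (ht.eq_releaseTime_of_mod_eq_zero hv h)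
  rw [← sum_candHeads_of_mod_ne_zero a (out := out) hmod]
  exact configOf_lt hprec hT ht hv

theorem U_configOf (hmono : Monotone D) (hD0 : D 0 = ∅)
    (hprec : ∀ v, IsStrictTotalOrder (V × ℕ) (prec v)) (hT : IsSpanningTree a S out e)
    (ht : IsSchedule S D kk e t) :
    U a S (configOf a S out prec e t) D kk = unburnt S t := by
  funext m
  induction m with
  | zero => exact (Finset.filter_true_of_mem fun u hu => ht.one_le hu).symm
  | succ m ih =>
    ext u
    rw [mem_U_succ, ih, mem_unburnt, mem_unburnt, mem_D_iff_lt_releaseTime hmono hD0]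
    have hrel := ht.releaseTime_le (v := u)
    constructor
    · rintro ⟨⟨hu, hm⟩, hprot | hlt⟩
      · exact ⟨hu, by have := hrel hu; omega⟩
      · refine ⟨hu, lt_of_le_of_ne hm fun h => hlt.not_ge ?_⟩
        have := sum_unburnt_le_configOf a S out prec e t u
        rwa [← h, Nat.add_sub_cancel] at this
    · rintro ⟨hu, hm⟩
      refine ⟨⟨hu, by omega⟩, ?_⟩
      by_cases hprot : m + 1 < releaseTime S D kk u
      · exact Or.inl hprot
      · refine Or.inr ((configOf_lt_sum_unburnt hprec hT ht hu (by omega)).trans_le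
          (Finset.sum_le_sum_of_subset (unburnt_anti (by omega))))

theorem spec_configOf (hmono : Monotone D) (hD0 : D 0 = ∅)
    (hprec : ∀ v, IsStrictTotalOrder (V × ℕ) (prec v)) (hT : IsSpanningTree a S out e)
    (ht : IsSchedule S D kk e t) :
    Spec a S out (configOf a S out prec e t) D kk prec e := by
  have hU := U_configOf hmono hD0 hprec hT ht
  refine ⟨hT.1, fun v hv => ?_⟩
  have hτ := tau_eq_of_U_eq_unburnt hU hv
  obtain ⟨he, hmem⟩ := ht.getD_mem_edgesTo hT hv
  have hsum := mv_add_sum_U (a := a) (S := S) (out := out) (η := configOf a S out prec e t)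
    (D := D) (kk := kk) v
  rw [hU, hτ] at hsum
  rw [Fv_eq_edgesTo hU hτ]
  refine ⟨_, he, hmem, ?_⟩
  rw [configOf]
  omega

theorem exists_recurrent_spec (hmono : Monotone D) (hD0 : D 0 = ∅)
    (hprec : ∀ v, IsStrictTotalOrder (V × ℕ) (prec v)) (hout : ∀ v, Disjoint (out v) S)
    (hT : IsSpanningTree a S out e) :
    ∃ η, Recurrent a S out η ∧ Spec a S out η D kk prec e := by
  obtain ⟨t, ht⟩ := exists_isSchedule (D := D) (kk := kk) hT.wellFounded
  exact ⟨_, recurrent_configOf hprec hout hT ht, spec_configOf hmono hD0 hprec hT ht⟩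

end Inverse

end Anchored

theorem stmt5_general {V : Type*} [DecidableEq V]
    (a : V → V → ℕ) (nbrs : V → Finset V)
    (S : Finset V)
    (D : ℕ → Finset V) (hmono : Monotone D) (hD0 : D 0 = ∅)
    (kk : ℕ)
    (prec : V → (V × ℕ) → (V × ℕ) → Prop)
    (hprec : ∀ v, IsStrictTotalOrder (V × ℕ) (prec v))
    (out : V → Finset V) (hout : ∀ v, out v = nbrs v \ S) :
    (∀ η, Anchored.Recurrent a S out η →
        ∃ e, Anchored.Spec a S out η D kk prec e ∧
          Anchored.IsSpanningTree a S out e) ∧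
    (∀ η₁ η₂ e₁ e₂, Anchored.Recurrent a S out η₁ → Anchored.Recurrent a S out η₂ →
        Anchored.Spec a S out η₁ D kk prec e₁ →
        Anchored.Spec a S out η₂ D kk prec e₂ →
        e₁ = e₂ → ∀ v ∈ S, η₁ v = η₂ v) ∧
    (∀ e, Anchored.IsSpanningTree a S out e →
        ∃ η, Anchored.Recurrent a S out η ∧ Anchored.Spec a S out η D kk prec e) := by
  have hdisj : ∀ v, Disjoint (out v) S := fun v => hout v ▸ Finset.sdiff_disjoint
  refine ⟨fun η hR => ?_, fun η₁ η₂ e₁ e₂ hR₁ hR₂ h₁ h₂ he => ?_, fun e hT => ?_⟩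
  · obtain ⟨e, he⟩ := Anchored.exists_spec (kk := kk) hD0 hR hprec hdisj
    exact ⟨e, he, he.isSpanningTree hmono hD0 hR.2 hdisj⟩
  · subst he
    exact Anchored.eq_of_spec hmono hD0 hdisj hR₁ hR₂ h₁ h₂
  · exact Anchored.exists_recurrent_spec hmono hD0 hprec hdisj hT

/-- The anchored burning map `φ_{D,Λ} : R_Λ → T_Λ` on the
wired graph `G_Λ` (`S = Λ`, sink edges to `out v = nbrs v \ Λ`) is well
defined and injective on recurrent configurations, and consequently a
bijection between `R_Λ` and the spanning trees `T_Λ`. -/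
theorem stmt5 {V : Type*} [DecidableEq V] [Infinite V]
    (a : V → V → ℕ) (nbrs : V → Finset V)
    (hsymm : ∀ u v, a u v = a v u) (hloop : ∀ v, a v v = 0)
    (hnbrs : ∀ v w, w ∈ nbrs v ↔ 0 < a v w)
    (hconn : ∀ u v : V, Anchored.ReachAvoid a ∅ u v)
    (S : Finset V) (hS : S.Nonempty)
    (D : ℕ → Finset V) (hmono : Monotone D) (hD0 : D 0 = ∅)
    (hcover : ∀ v, ∃ j, v ∈ D j)
    (hsc : ∀ j, 1 ≤ j → ∀ v ∉ D j, {w | Anchored.ReachAvoid a (D j) v w}.Infinite)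
    (kk : ℕ) (hK : D kk ⊆ S) (hKmax : ∀ j, D j ⊆ S → j ≤ kk)
    (prec : V → (V × ℕ) → (V × ℕ) → Prop)
    (hprec : ∀ v, IsStrictTotalOrder (V × ℕ) (prec v))
    (out : V → Finset V) (hout : ∀ v, out v = nbrs v \ S) :
    (∀ η, Anchored.Recurrent a S out η →
        ∃ e, Anchored.Spec a S out η D kk prec e ∧
          Anchored.IsSpanningTree a S out e) ∧
    (∀ η₁ η₂ e₁ e₂, Anchored.Recurrent a S out η₁ → Anchored.Recurrent a S out η₂ →
        Anchored.Spec a S out η₁ D kk prec e₁ →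
        Anchored.Spec a S out η₂ D kk prec e₂ →
        e₁ = e₂ → ∀ v ∈ S, η₁ v = η₂ v) ∧
    (∀ e, Anchored.IsSpanningTree a S out e →
        ∃ η, Anchored.Recurrent a S out η ∧ Anchored.Spec a S out η D kk prec e) :=
  stmt5_general a nbrs S D hmono hD0 kk prec hprec out hout
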